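/- Let a > 0 and set q₁ = Φ(a), q₂ = Φ(a√2), q₃ = Φ(a√3). Define the quadratic D(τ) = (−9q₁ + 9q₂ − 3q₃)τ² + (6q₁ − 12q₂ + 6q₃)τ + (q₁ + 3q₂ − 3q₃), which equals the derivative with respect to τ of ΔP(3, τ) = Σ_{j=1}^{3} q_j C(3, j)(1−τ)^j τ^{3−j} − q₁(1−τ). Then D(τ) > 0 for every τ ∈ [0, 1/2]. -/

import Mathlib

open MeasureTheory Real

/-- The standard normal cumulative distribution function
`Φ(x) = (1/√(2π)) ∫_{-∞}^{x} e^{-t²/2} dt`. -/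
noncomputable def stdGaussianCDF (x : ℝ) : ℝ :=
  (Real.sqrt (2 * Real.pi))⁻¹ * ∫ t in Set.Iic x, Real.exp (-t ^ 2 / 2)

/-- `P(k, τ) = Σ_{j=1}^{k} Φ(a√j) C(k, j) (1−τ)^j τ^{k−j}`. -/
noncomputable def accP (a : ℝ) (k : ℕ) (τ : ℝ) : ℝ :=
  ∑ j ∈ Finset.Icc 1 k,
    stdGaussianCDF (a * Real.sqrt j) * (k.choose j) * (1 - τ) ^ j * τ ^ (k - j)

/-- `ΔP(k, τ) = P(k, τ) − q₁ (1−τ)` where `q₁ = Φ(a)`. -/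
noncomputable def deltaP (a : ℝ) (k : ℕ) (τ : ℝ) : ℝ :=
  accP a k τ - stdGaussianCDF a * (1 - τ)

/-- The quadratic `D(τ) = (−9q₁+9q₂−3q₃)τ² + (6q₁−12q₂+6q₃)τ + (q₁+3q₂−3q₃)`
where `qⱼ = Φ(a√j)`. -/
noncomputable def quadD (a τ : ℝ) : ℝ :=
  (-9 * stdGaussianCDF a + 9 * stdGaussianCDF (a * Real.sqrt 2)
      - 3 * stdGaussianCDF (a * Real.sqrt 3)) * τ ^ 2
    + (6 * stdGaussianCDF a - 12 * stdGaussianCDF (a * Real.sqrt 2)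
      + 6 * stdGaussianCDF (a * Real.sqrt 3)) * τ
    + (stdGaussianCDF a + 3 * stdGaussianCDF (a * Real.sqrt 2)
      - 3 * stdGaussianCDF (a * Real.sqrt 3))

/-!
Write `qⱼ = Φ(a√j)`. Since `ΔP(3, ·)` is a cubic, `D` is a quadratic, and everything reduces
to the single inequality `6(q₂ - q₁) + 3(q₃ - q₂) < q₁`: it gives `D(0) > 0`,
`D(1/2) = (7q₁ - 3q₂ - 3q₃)/4 > 0` and (as `q₁ ≥ 1/2`) a nonpositive leading coefficient,
so `D` is concave and positive at both ends of `[0, 1/2]`.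

The inequality is analytic. The Gaussian density `φ` decreases on `[0, ∞)`, so
`q₂ - q₁ ≤ (√2 - 1) a φ(a)` and `q₃ - q₂ ≤ (√3 - √2) a φ(a√2)`, while `1 + x ≤ eˣ`
gives `q₁ - 1/2 ≥ (a + a³/3) φ(a)`. What remains is an elementary inequality in `a` and
`E = e^{-a²/2}`, which holds because `E (1 + a²/4)² ≤ 1`.
-/

lemma integrable_exp_neg_sq_div_two : Integrable (fun t : ℝ => exp (-t ^ 2 / 2)) := by
  simpa [div_eq_inv_mul, neg_div] using integrable_exp_neg_mul_sq (b := (1 / 2 : ℝ)) (by norm_num)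

lemma stdGaussianCDF_sub (a b : ℝ) :
    stdGaussianCDF b - stdGaussianCDF a = (√(2 * π))⁻¹ * ∫ t in a..b, exp (-t ^ 2 / 2) := by
  rw [stdGaussianCDF, stdGaussianCDF, ← mul_sub,
    intervalIntegral.integral_Iic_sub_Iic integrable_exp_neg_sq_div_two.integrableOn
      integrable_exp_neg_sq_div_two.integrableOn]

lemma monotone_stdGaussianCDF : Monotone stdGaussianCDF := by
  intro a b hab
  rw [← sub_nonneg, stdGaussianCDF_sub]
  exact mul_nonneg (by positivity)
    (intervalIntegral.integral_nonneg hab fun t _ => (exp_pos _).le)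

lemma stdGaussianCDF_zero : stdGaussianCDF 0 = 1 / 2 := by
  have h := integral_comp_neg_Iic 0 (fun t : ℝ => exp (-(1 / 2) * t ^ 2))
  rw [neg_zero, integral_gaussian_Ioi, div_div_eq_mul_div, div_one, mul_comm] at h
  have h_half : ∫ t in Set.Iic (0 : ℝ), exp (-t ^ 2 / 2) = √(2 * π) / 2 := by
    rw [← h]
    congr with t
    ring_nf
  rw [stdGaussianCDF, h_half]
  field_simp

lemma stdGaussianCDF_sub_le {a b : ℝ} (ha : 0 ≤ a) (hab : a ≤ b) :
    stdGaussianCDF b - stdGaussianCDF a ≤ (√(2 * π))⁻¹ * ((b - a) * exp (-a ^ 2 / 2)) := by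
  rw [stdGaussianCDF_sub]
  gcongr
  calc ∫ t in a..b, exp (-t ^ 2 / 2)
      ≤ ∫ _ in a..b, exp (-a ^ 2 / 2) :=
        intervalIntegral.integral_mono_on hab integrable_exp_neg_sq_div_two.intervalIntegrable
          intervalIntegrable_const fun t ht => by
            gcongr
            exact ht.1
    _ = (b - a) * exp (-a ^ 2 / 2) := by simp

lemma half_add_le_stdGaussianCDF {a : ℝ} (ha : 0 ≤ a) :
    1 / 2 + (√(2 * π))⁻¹ * ((a + a ^ 3 / 3) * exp (-a ^ 2 / 2)) ≤ stdGaussianCDF a := by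
  have h_tangent : ∀ t, (1 + (a ^ 2 - t ^ 2) / 2) * exp (-a ^ 2 / 2) ≤ exp (-t ^ 2 / 2) := by
    intro t
    calc (1 + (a ^ 2 - t ^ 2) / 2) * exp (-a ^ 2 / 2)
        ≤ exp ((a ^ 2 - t ^ 2) / 2) * exp (-a ^ 2 / 2) := by
          gcongr
          linarith [add_one_le_exp ((a ^ 2 - t ^ 2) / 2)]
      _ = exp (-t ^ 2 / 2) := by rw [← exp_add]; ring_nf
  have h_int : (a + a ^ 3 / 3) * exp (-a ^ 2 / 2) ≤ ∫ t in (0 : ℝ)..a, exp (-t ^ 2 / 2) :=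
    calc (a + a ^ 3 / 3) * exp (-a ^ 2 / 2)
        = ∫ t in (0 : ℝ)..a, (1 + (a ^ 2 - t ^ 2) / 2) * exp (-a ^ 2 / 2) := by
          rw [intervalIntegral.integral_mul_const]
          congr 1
          have hp : IntervalIntegrable (fun x : ℝ => (a ^ 2 - x ^ 2) / 2) volume 0 a :=
            (by fun_prop : Continuous _).intervalIntegrable _ _
          rw [intervalIntegral.integral_add intervalIntegrable_const hp,
            intervalIntegral.integral_div,
            intervalIntegral.integral_sub intervalIntegrable_const (by simp)]
          simp only [intervalIntegral.integral_const, integral_pow, smul_eq_mul]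
          ring
      _ ≤ ∫ t in (0 : ℝ)..a, exp (-t ^ 2 / 2) :=
          intervalIntegral.integral_mono_on ha ((by fun_prop : Continuous _).intervalIntegrable _ _)
            integrable_exp_neg_sq_div_two.intervalIntegrable fun t _ => h_tangent t
  have h_sub := stdGaussianCDF_sub 0 a
  rw [stdGaussianCDF_zero] at h_sub
  have := mul_le_mul_of_nonneg_left h_int (inv_nonneg.2 (sqrt_nonneg (2 * π)))
  linarith

lemma exp_neg_sq_div_two_mul_le_one (a : ℝ) : exp (-a ^ 2 / 2) * (1 + a ^ 2 / 4) ^ 2 ≤ 1 := by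
  have h : (1 + a ^ 2 / 4) ^ 2 ≤ exp (a ^ 2 / 2) :=
    calc (1 + a ^ 2 / 4) ^ 2 ≤ exp (a ^ 2 / 4) ^ 2 := by
          gcongr
          linarith [add_one_le_exp (a ^ 2 / 4)]
      _ = exp (a ^ 2 / 2) := by rw [← exp_nat_mul]; ring_nf
  calc exp (-a ^ 2 / 2) * (1 + a ^ 2 / 4) ^ 2 ≤ exp (-a ^ 2 / 2) * exp (a ^ 2 / 2) := by gcongr
    _ = 1 := by rw [← exp_add]; ring_nf; exact exp_zero

lemma inv_sqrt_two_pi_mul_lt_half {a E : ℝ} (ha : 0 < a) (hE : 0 < E)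
    (hEa : E * (1 + a ^ 2 / 4) ^ 2 ≤ 1) :
    (√(2 * π))⁻¹ * (a * E * (6 * √2 - 7 - a ^ 2 / 3 + 3 * (√3 - √2) * E)) < 1 / 2 := by
  set B := 6 * √2 - 7 - a ^ 2 / 3 + 3 * (√3 - √2) * E with hB_def
  rcases le_or_gt B 0 with hB | hB
  · have : (√(2 * π))⁻¹ * (a * E * B) ≤ 0 :=
      mul_nonpos_of_nonneg_of_nonpos (by positivity)
        (mul_nonpos_of_nonneg_of_nonpos (by positivity) hB)
    linarith
  have h_sqrt_two : √2 ≤ 1.41421357 := (sqrt_le_left (by norm_num)).2 (by norm_num)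
  have h_sqrt_two' : 1.41421356 ≤ √2 := le_sqrt_of_sq_le (by norm_num)
  have h_sqrt_three : √3 ≤ 1.73205081 := (sqrt_le_left (by norm_num)).2 (by norm_num)
  have h_two_pi : (√(2 * π))⁻¹ ≤ 0.39895 := by
    rw [inv_le_comm₀ (by positivity) (by norm_num)]
    exact le_sqrt_of_sq_le (by nlinarith [pi_gt_d6])
  have hB_le : B ≤ 1.4852816 - a ^ 2 / 3 + 0.9535123 * E := by
    have : (√3 - √2) * E ≤ 0.31783725 * E := by gcongr; linarith
    linarith [hB_def]
  -- on `E (1 + a²/4)² = 1` the left side peaks at about `0.47`, near `a ≈ 0.82`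
  have h_poly : 0.39895 * (a * E * (1.4852816 - a ^ 2 / 3 + 0.9535123 * E)) < 1 / 2 := by
    nlinarith [sq_nonneg (a - 0.8155), sq_nonneg (E - 0.7344), sq_nonneg (a * E - 0.6),
      sq_nonneg a, sq_nonneg E, mul_pos ha hE, sq_nonneg (a - 1), sq_nonneg (a * E),
      mul_pos (mul_pos ha hE) hE]
  calc (√(2 * π))⁻¹ * (a * E * B) ≤ 0.39895 * (a * E * B) := by gcongr
    _ ≤ 0.39895 * (a * E * (1.4852816 - a ^ 2 / 3 + 0.9535123 * E)) := by gcongr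
    _ < 1 / 2 := h_poly

lemma stdGaussianCDF_increments_lt {a : ℝ} (ha : 0 < a) :
    6 * (stdGaussianCDF (a * √2) - stdGaussianCDF a)
      + 3 * (stdGaussianCDF (a * √3) - stdGaussianCDF (a * √2)) < stdGaussianCDF a := by
  have h₁₂ : a ≤ a * √2 := le_mul_of_one_le_right ha.le (one_le_sqrt.2 (by norm_num))
  have h₂₃ : a * √2 ≤ a * √3 := by gcongr; norm_num
  have h_exp : exp (-(a * √2) ^ 2 / 2) = exp (-a ^ 2 / 2) * exp (-a ^ 2 / 2) := by
    rw [← exp_add, mul_pow, sq_sqrt zero_le_two]; ring_nf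
  have g₁₂ := stdGaussianCDF_sub_le ha.le h₁₂
  have g₂₃ := stdGaussianCDF_sub_le (by positivity) h₂₃
  rw [h_exp] at g₂₃
  have h_low := half_add_le_stdGaussianCDF ha.le
  have h_err := inv_sqrt_two_pi_mul_lt_half ha (exp_pos (-a ^ 2 / 2))
    (exp_neg_sq_div_two_mul_le_one a)
  linear_combination 6 * g₁₂ + 3 * g₂₃ + h_low + h_err

open Polynomial in
lemma hasDerivAt_deltaP_three (a τ : ℝ) : HasDerivAt (deltaP a 3) (quadD a τ) τ := by
  set q₁ := stdGaussianCDF a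
  set q₂ := stdGaussianCDF (a * √2)
  set q₃ := stdGaussianCDF (a * √3)
  let p : ℝ[X] := C (3 * q₁) * (1 - X) * X ^ 2 + C (3 * q₂) * (1 - X) ^ 2 * X
    + C q₃ * (1 - X) ^ 3 - C q₁ * (1 - X)
  have hp : deltaP a 3 = fun t => p.eval t := by
    funext t
    rw [deltaP, accP, show Finset.Icc 1 3 = {1, 2, 3} from rfl]
    norm_num [p, q₁, Nat.choose]
    ring
  rw [hp]
  refine (p.hasDerivAt τ).congr_deriv ?_
  simp only [p, quadD, q₁, q₂, q₃, derivative_pow, derivative_mul, derivative_add,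
    derivative_sub, derivative_C, derivative_one, derivative_X, eval_add, eval_mul, eval_C,
    eval_pow, eval_X, eval_sub, eval_one, eval_zero]
  ring

lemma concave_quadratic_pos_on_Icc {A B C l r τ : ℝ} (hA : A ≤ 0)
    (hl : 0 < A * l ^ 2 + B * l + C) (hr : 0 < A * r ^ 2 + B * r + C) (hτ : τ ∈ Set.Icc l r) :
    0 < A * τ ^ 2 + B * τ + C := by
  obtain ⟨hlτ, hτr⟩ := hτ
  rcases hlτ.eq_or_lt with rfl | hlτ
  · exact hl
  have hlr : 0 < r - l := by linarith
  have h_chord : (r - l) * (A * τ ^ 2 + B * τ + C) = (r - τ) * (A * l ^ 2 + B * l + C)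
      + (τ - l) * (A * r ^ 2 + B * r + C) + -A * (τ - l) * (r - τ) * (r - l) := by ring
  refine pos_of_mul_pos_right (a := r - l) ?_ hlr.le
  rw [h_chord]
  have h_bulge : 0 ≤ -A * (τ - l) * (r - τ) * (r - l) :=
    mul_nonneg (mul_nonneg (mul_nonneg (neg_nonneg.2 hA) (sub_pos.2 hlτ).le) (sub_nonneg.2 hτr))
      hlr.le
  linarith [mul_pos (sub_pos.2 hlτ) hr, mul_nonneg (sub_nonneg.2 hτr) hl.le]

theorem stmt13 (a : ℝ) (ha : 0 < a) :
    (∀ τ : ℝ, deriv (deltaP a 3) τ = quadD a τ)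
      ∧ ∀ τ ∈ Set.Icc (0 : ℝ) (1 / 2), 0 < quadD a τ := by
  refine ⟨fun τ => (hasDerivAt_deltaP_three a τ).deriv, fun τ hτ => ?_⟩
  have h_inc := stdGaussianCDF_increments_lt ha
  have h₁₂ : stdGaussianCDF a ≤ stdGaussianCDF (a * √2) :=
    monotone_stdGaussianCDF (le_mul_of_one_le_right ha.le (one_le_sqrt.2 (by norm_num)))
  have h₂₃ : stdGaussianCDF (a * √2) ≤ stdGaussianCDF (a * √3) :=
    monotone_stdGaussianCDF (by gcongr; norm_num)
  have h_half : 1 / 2 ≤ stdGaussianCDF a := stdGaussianCDF_zero ▸ monotone_stdGaussianCDF ha.le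
  exact concave_quadratic_pos_on_Icc (by linarith) (by linarith) (by linarith) hτ
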